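/- arXiv:2602.23525 — 5 statements merged into one kernel-verified Lean document; each statement's English description precedes it below -/
import Mathlib

section
/- Let n = n₁·n₂ with n₁, n₂ ≥ 1, let X : Fin n → ℂ, and let Y be the DFT of X. Then for all k₁ with 0 ≤ k₁ < n₁ and k₂ with 0 ≤ k₂ < n₂, one has Y[k₁ + k₂·n₁] = Σ_{ℓ₂=0}^{n₂−1} [ ( Σ_{ℓ₁=0}^{n₁−1} X[ℓ₁·n₂ + ℓ₂] · ω_{n₁}^{ℓ₁ k₁} ) · ω_n^{ℓ₂ k₁} ] · ω_{n₂}^{ℓ₂ k₂} (the Cooley–Tukey decimation-in-time decomposition: n₂ DFTs of size n₁, multiplication by the twiddle factors ω_n^{ℓ₂ k₁}, then n₁ DFTs of size n₂). -/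
/-- `dftRoot m` is the primitive `m`-th root of unity `ω_m = exp(-2πi/m)`. -/
noncomputable def dftRoot (m : ℕ) : ℂ := Complex.exp (-(2 * Real.pi * Complex.I) / m)

/-- The Cooley–Tukey decimation-in-time decomposition: if `n = n₁·n₂` and `Y` is the
DFT of `X`, then `Y[k₁ + k₂·n₁]` is obtained by `n₂` DFTs of size `n₁`, multiplication
by the twiddle factors `ω_n^{ℓ₂ k₁}`, and `n₁` DFTs of size `n₂`. -/
theorem cooley_tukey_dit
    (n₁ n₂ : ℕ) (h₁ : 1 ≤ n₁) (h₂ : 1 ≤ n₂)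
    (X Y : Fin (n₁ * n₂) → ℂ)
    (hY : ∀ k : Fin (n₁ * n₂),
      Y k = ∑ ℓ : Fin (n₁ * n₂), X ℓ * dftRoot (n₁ * n₂) ^ ((ℓ : ℕ) * (k : ℕ)))
    (k₁ k₂ : ℕ) (hk₁ : k₁ < n₁) (hk₂ : k₂ < n₂) :
    Y ⟨k₁ + k₂ * n₁, by nlinarith⟩ =
      ∑ ℓ₂ : Fin n₂,
        ((∑ ℓ₁ : Fin n₁,
            X ⟨(ℓ₁ : ℕ) * n₂ + (ℓ₂ : ℕ), by nlinarith [ℓ₁.isLt, ℓ₂.isLt]⟩ *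
              dftRoot n₁ ^ ((ℓ₁ : ℕ) * k₁)) *
          dftRoot (n₁ * n₂) ^ ((ℓ₂ : ℕ) * k₁)) *
        dftRoot n₂ ^ ((ℓ₂ : ℕ) * k₂) := by
  have h1 : (n₁:ℂ) ≠ 0 := Nat.cast_ne_zero.mpr (by omega)
  have h2 : (n₂:ℂ) ≠ 0 := Nat.cast_ne_zero.mpr (by omega)
  have hr1 : dftRoot (n₁*n₂) ^ n₂ = dftRoot n₁ := by
    unfold dftRoot
    rw [← Complex.exp_nat_mul]
    congr 1
    push_cast
    field_simp
  have hr2 : dftRoot (n₁*n₂) ^ n₁ = dftRoot n₂ := by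
    unfold dftRoot
    rw [← Complex.exp_nat_mul]
    congr 1
    push_cast
    field_simp
  have hunit : dftRoot (n₁*n₂) ^ (n₁*n₂) = 1 := by
    unfold dftRoot
    rw [← Complex.exp_nat_mul]
    have hc : ((n₁*n₂ : ℕ):ℂ) * (-(2 * Real.pi * Complex.I) / ((n₁*n₂:ℕ):ℂ))
        = -(2 * Real.pi * Complex.I) := by
      have : ((n₁*n₂ : ℕ):ℂ) ≠ 0 := by push_cast; exact mul_ne_zero h1 h2
      field_simp
    rw [hc, Complex.exp_neg, Complex.exp_two_pi_mul_I, inv_one]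
  rw [hY]
  rw [← Equiv.sum_comp (finProdFinEquiv (m := n₁) (n := n₂))]
  rw [Fintype.sum_prod_type_right]
  congr 1
  ext ℓ₂
  rw [Finset.sum_mul, Finset.sum_mul]
  congr 1
  ext ℓ₁
  have hval : ((finProdFinEquiv (ℓ₁, ℓ₂) : Fin (n₁*n₂)) : ℕ) = ℓ₁ * n₂ + ℓ₂ := by
    simp [finProdFinEquiv]; ring
  have hX : X (finProdFinEquiv (ℓ₁, ℓ₂)) =
      X ⟨(ℓ₁ : ℕ) * n₂ + (ℓ₂ : ℕ), by nlinarith [ℓ₁.isLt, ℓ₂.isLt]⟩ := by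
    congr 1
    exact Fin.ext hval
  rw [hX, hval]
  rw [← hr1, ← hr2]
  have hexp : ((ℓ₁:ℕ) * n₂ + ℓ₂) * (k₁ + k₂ * n₁)
      = n₂ * ((ℓ₁:ℕ) * k₁) + (ℓ₂:ℕ) * k₁ + n₁ * ((ℓ₂:ℕ) * k₂) + (n₁*n₂) * ((ℓ₁:ℕ)*k₂) := by
    ring
  rw [hexp]
  rw [pow_add, pow_add, pow_add, pow_mul _ (n₁*n₂), hunit, one_pow, pow_mul, pow_mul, pow_mul]
  ring
end

section
/- Let n = n₁·n₂ with n₁, n₂ ≥ 1, let X : Fin n → ℂ, and let Y be the DFT of X. Then for all k₁ with 0 ≤ k₁ < n₁ and k₂ with 0 ≤ k₂ < n₂, one has Y[k₁·n₂ + k₂] = Σ_{ℓ₁=0}^{n₁−1} [ ( Σ_{ℓ₂=0}^{n₂−1} X[ℓ₁ + ℓ₂·n₁] · ω_{n₂}^{ℓ₂ k₂} ) · ω_n^{ℓ₁ k₂} ] · ω_{n₁}^{ℓ₁ k₁} (the Cooley–Tukey decimation-in-frequency decomposition, using n₁ as the radix). -/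
lemma dftRoot_pow_self (m : ℕ) (hm : m ≠ 0) : dftRoot m ^ m = 1 := by
  rw [dftRoot, ← Complex.exp_nat_mul]
  have hm' : (m : ℂ) ≠ 0 := Nat.cast_ne_zero.mpr hm
  have : (m : ℂ) * (-(2 * Real.pi * Complex.I) / m) = (-1 : ℤ) * (2 * Real.pi * Complex.I) := by
    rw [mul_comm, div_mul_cancel₀ _ hm']
    push_cast; ring
  rw [this, Complex.exp_int_mul_two_pi_mul_I]

lemma dftRoot_mul_pow (a b : ℕ) (hb : b ≠ 0) : dftRoot (a * b) ^ b = dftRoot a := by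
  rw [dftRoot, dftRoot, ← Complex.exp_nat_mul]
  congr 1
  have hb' : (b : ℂ) ≠ 0 := Nat.cast_ne_zero.mpr hb
  push_cast
  by_cases ha : (a : ℂ) = 0
  · simp [ha]
  · field_simp

/-- The Cooley–Tukey decimation-in-frequency decomposition, using `n₁` as the radix. -/
theorem cooley_tukey_dif
    (n₁ n₂ : ℕ) (h₁ : 1 ≤ n₁) (h₂ : 1 ≤ n₂)
    (X Y : Fin (n₁ * n₂) → ℂ)
    (hY : ∀ k : Fin (n₁ * n₂),
      Y k = ∑ ℓ : Fin (n₁ * n₂), X ℓ * dftRoot (n₁ * n₂) ^ ((ℓ : ℕ) * (k : ℕ)))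
    (k₁ k₂ : ℕ) (hk₁ : k₁ < n₁) (hk₂ : k₂ < n₂) :
    Y ⟨k₁ * n₂ + k₂, by nlinarith⟩ =
      ∑ ℓ₁ : Fin n₁,
        ((∑ ℓ₂ : Fin n₂,
            X ⟨(ℓ₁ : ℕ) + (ℓ₂ : ℕ) * n₁, by nlinarith [ℓ₁.isLt, ℓ₂.isLt]⟩ *
              dftRoot n₂ ^ ((ℓ₂ : ℕ) * k₂)) *
          dftRoot (n₁ * n₂) ^ ((ℓ₁ : ℕ) * k₂)) *
        dftRoot n₁ ^ ((ℓ₁ : ℕ) * k₁) := by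
  have hn₁ : n₁ ≠ 0 := by omega
  have hn₂ : n₂ ≠ 0 := by omega
  rw [hY]
  have hbij : Function.Bijective (fun p : Fin n₁ × Fin n₂ =>
      (⟨(p.1 : ℕ) + (p.2 : ℕ) * n₁, by nlinarith [p.1.isLt, p.2.isLt]⟩ : Fin (n₁ * n₂))) := by
    rw [Fintype.bijective_iff_injective_and_card]
    constructor
    · rintro ⟨a, b⟩ ⟨a', b'⟩ h
      have h' : (a : ℕ) + (b : ℕ) * n₁ = (a' : ℕ) + (b' : ℕ) * n₁ := by
        simpa using congrArg Fin.val h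
      have ha := a.isLt; have ha' := a'.isLt
      have hA : (a : ℕ) = a' := by
        have := congrArg (· % n₁) h'
        simpa [Nat.add_mul_mod_self_right, Nat.mod_eq_of_lt ha, Nat.mod_eq_of_lt ha'] using this
      have hB : (b : ℕ) = b' := by
        have hm : (b : ℕ) * n₁ = (b' : ℕ) * n₁ := by omega
        exact Nat.eq_of_mul_eq_mul_right (by omega) hm
      ext <;> simp [hA, hB]
    · simp [mul_comm]
  rw [← Fintype.sum_bijective _ hbij _ _ (fun _ => rfl)]
  rw [Fintype.sum_prod_type]
  have hw1 : dftRoot (n₁ * n₂) ^ n₁ = dftRoot n₂ := by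
    rw [mul_comm]; exact dftRoot_mul_pow n₂ n₁ hn₁
  have hw2 : dftRoot (n₁ * n₂) ^ n₂ = dftRoot n₁ := dftRoot_mul_pow n₁ n₂ hn₂
  have hw0 : dftRoot (n₁ * n₂) ^ (n₁ * n₂) = 1 := dftRoot_pow_self _ (by positivity)
  refine Finset.sum_congr rfl fun a _ => ?_
  rw [Finset.sum_mul, Finset.sum_mul]
  refine Finset.sum_congr rfl fun b _ => ?_
  simp only
  have key : dftRoot (n₁ * n₂) ^ (((a : ℕ) + (b : ℕ) * n₁) * (k₁ * n₂ + k₂)) =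
      (dftRoot (n₁ * n₂) ^ n₂) ^ ((a : ℕ) * k₁) * dftRoot (n₁ * n₂) ^ ((a : ℕ) * k₂) *
      (dftRoot (n₁ * n₂) ^ n₁) ^ ((b : ℕ) * k₂) *
      (dftRoot (n₁ * n₂) ^ (n₁ * n₂)) ^ ((b : ℕ) * k₁) := by
    rw [← pow_mul, ← pow_mul, ← pow_mul, ← pow_add, ← pow_add, ← pow_add]
    congr 1
    ring
  rw [key, hw0, hw1, hw2, one_pow]
  ring
end

section
/- Let n = 2m with m ≥ 1, let X : Fin n → ℂ, and let Y be the DFT of X. Define E, O : Fin m → ℂ to be the DFTs of the even-indexed and odd-indexed subsequences of X, i.e. E[k] = Σ_{j=0}^{m−1} X[2j]·ω_m^{jk} and O[k] = Σ_{j=0}^{m−1} X[2j+1]·ω_m^{jk}. Then for every k with 0 ≤ k < m, Y[k] = E[k] + ω_n^k·O[k] and Y[k+m] = E[k] − ω_n^k·O[k] (the radix-2 decimation-in-time butterfly combination step of Algorithm recfft2). -/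
lemma two_mul_fin_lt (m : ℕ) (j : Fin m) : 2 * (j : ℕ) < 2 * m := by omega

lemma two_mul_fin_add_one_lt (m : ℕ) (j : Fin m) : 2 * (j : ℕ) + 1 < 2 * m := by omega

lemma sum_even_odd (m : ℕ) (f : Fin (2 * m) → ℂ) :
    ∑ ℓ, f ℓ = (∑ j : Fin m, f ⟨2 * (j : ℕ), two_mul_fin_lt m j⟩)
      + ∑ j : Fin m, f ⟨2 * (j : ℕ) + 1, two_mul_fin_add_one_lt m j⟩ := by
  rw [← Equiv.sum_comp ((finProdFinEquiv (m := m) (n := 2)).trans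
      (finCongr (by ring : m * 2 = 2 * m))) f]
  rw [Fintype.sum_prod_type]
  rw [← Finset.sum_add_distrib]
  refine Finset.sum_congr rfl fun j _ => ?_
  rw [Fin.sum_univ_two]
  congr 1 <;> · congr 1; apply Fin.ext; simp [finProdFinEquiv]; try omega

lemma dftRoot_sq (m : ℕ) (hm : 1 ≤ m) : dftRoot (2 * m) ^ 2 = dftRoot m := by
  have hm0 : (m : ℂ) ≠ 0 := Nat.cast_ne_zero.mpr (by omega)
  unfold dftRoot
  rw [← Complex.exp_nat_mul]
  congr 1
  push_cast
  field_simp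

lemma dftRoot_pow_m (m : ℕ) (hm : 1 ≤ m) : dftRoot (2 * m) ^ m = -1 := by
  have hm0 : (m : ℂ) ≠ 0 := Nat.cast_ne_zero.mpr (by omega)
  unfold dftRoot
  rw [← Complex.exp_nat_mul]
  have h : (m : ℂ) * (-(2 * Real.pi * Complex.I) / ((2 * m : ℕ) : ℂ))
      = -(Real.pi * Complex.I) := by
    push_cast
    field_simp
  rw [h, Complex.exp_neg, Complex.exp_pi_mul_I]
  norm_num

lemma dftRoot_pow_2m (m : ℕ) (hm : 1 ≤ m) : dftRoot (2 * m) ^ (2 * m) = 1 := by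
  rw [pow_mul' _ 2 m, dftRoot_pow_m m hm]
  norm_num

/-- The radix-2 decimation-in-time butterfly combination step: if `n = 2m`, `Y` is
the DFT of `X`, and `E`, `O` are the DFTs of the even- and odd-indexed subsequences
of `X`, then `Y[k] = E[k] + ω_n^k·O[k]` and `Y[k+m] = E[k] − ω_n^k·O[k]` for `k < m`. -/
theorem radix2_dit_butterfly
    (m : ℕ) (hm : 1 ≤ m)
    (X Y : Fin (2 * m) → ℂ)
    (hY : ∀ k : Fin (2 * m),
      Y k = ∑ ℓ : Fin (2 * m), X ℓ * dftRoot (2 * m) ^ ((ℓ : ℕ) * (k : ℕ)))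
    (E O : Fin m → ℂ)
    (hE : ∀ k : Fin m,
      E k = ∑ j : Fin m, X ⟨2 * (j : ℕ), by omega⟩ * dftRoot m ^ ((j : ℕ) * (k : ℕ)))
    (hO : ∀ k : Fin m,
      O k = ∑ j : Fin m, X ⟨2 * (j : ℕ) + 1, by omega⟩ * dftRoot m ^ ((j : ℕ) * (k : ℕ))) :
    ∀ k : Fin m,
      Y ⟨(k : ℕ), by omega⟩ = E k + dftRoot (2 * m) ^ (k : ℕ) * O k ∧
      Y ⟨(k : ℕ) + m, by omega⟩ = E k - dftRoot (2 * m) ^ (k : ℕ) * O k := by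
  intro k
  have h2 := dftRoot_sq m hm
  have hmm := dftRoot_pow_m m hm
  have h2m := dftRoot_pow_2m m hm
  constructor
  · rw [hY, hE, hO, sum_even_odd m (fun ℓ => X ℓ * dftRoot (2 * m) ^ ((ℓ : ℕ) * (k : ℕ)))]
    congr 1
    · refine Finset.sum_congr rfl fun j _ => ?_
      rw [show 2 * (j : ℕ) * (k : ℕ) = 2 * ((j : ℕ) * (k : ℕ)) by ring, pow_mul, h2]
    · rw [Finset.mul_sum]
      refine Finset.sum_congr rfl fun j _ => ?_
      rw [show (2 * (j : ℕ) + 1) * (k : ℕ) = 2 * ((j : ℕ) * (k : ℕ)) + (k : ℕ) by ring,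
        pow_add, pow_mul, h2]
      ring
  · rw [hY, hE, hO, sum_even_odd m
      (fun ℓ => X ℓ * dftRoot (2 * m) ^ ((ℓ : ℕ) * ((k : ℕ) + m)))]
    rw [sub_eq_add_neg, ← neg_mul, Finset.mul_sum]
    congr 1
    · refine Finset.sum_congr rfl fun j _ => ?_
      rw [show 2 * (j : ℕ) * ((k : ℕ) + m) = 2 * ((j : ℕ) * (k : ℕ)) + 2 * m * (j : ℕ) by ring,
        pow_add, pow_mul, h2, show dftRoot (2 * m) ^ (2 * m * (j : ℕ))
          = (dftRoot (2 * m) ^ (2 * m)) ^ (j : ℕ) from pow_mul _ _ _, h2m]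
      ring
    · refine Finset.sum_congr rfl fun j _ => ?_
      rw [show (2 * (j : ℕ) + 1) * ((k : ℕ) + m)
          = 2 * ((j : ℕ) * (k : ℕ)) + 2 * m * (j : ℕ) + (k : ℕ) + m by ring]
      rw [pow_add, pow_add, pow_add, pow_mul, h2, hmm,
        show dftRoot (2 * m) ^ (2 * m * (j : ℕ))
          = (dftRoot (2 * m) ^ (2 * m)) ^ (j : ℕ) from pow_mul _ _ _, h2m]
      ring
end

section
/- Let p be a prime, let g be a primitive root modulo p (a generator of the multiplicative group (ℤ/pℤ)ˣ), let X : Fin p → ℂ, and let Y be the DFT of X. Then for every integer m, Y[g^{−m} mod p] = X[0] + Σ_{q=0}^{p−2} X[g^q mod p] · exp(−2πi·(g^{q−m} mod p)/p). That is, the nonzero-frequency outputs of a prime-size DFT, re-indexed by powers of g, are given (up to the additive term X[0]) by the cyclic convolution of length p−1 of the sequences a_q = X[g^q mod p] and b_q = ω_p^{g^{−q} mod p} (Rader's algorithm). -/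
lemma dftRoot_pow (p n : ℕ) :
    dftRoot p ^ n = Complex.exp (-(2 * Real.pi * Complex.I) * n / p) := by
  rw [dftRoot, ← Complex.exp_nat_mul]
  ring_nf

lemma dftRoot_pow_self_s9 (p : ℕ) (hp : p ≠ 0) : dftRoot p ^ p = 1 := by
  rw [dftRoot_pow]
  have hp' : (p : ℂ) ≠ 0 := by exact_mod_cast hp
  rw [mul_div_assoc, div_self hp', mul_one, Complex.exp_neg,
    Complex.exp_two_pi_mul_I, inv_one]

/-- Rader's algorithm: for a prime `p` and a primitive root `g` modulo `p`, the
nonzero-frequency outputs of a size-`p` DFT, re-indexed by powers of `g`, are given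
(up to the additive term `X[0]`) by the length-`(p−1)` cyclic convolution of
`a_q = X[g^q mod p]` and `b_q = ω_p^{g^{−q} mod p}`: for every integer `m`,
`Y[g^{−m} mod p] = X[0] + Σ_{q=0}^{p−2} X[g^q mod p] · exp(−2πi·(g^{q−m} mod p)/p)`. -/
theorem rader_algorithm
    (p : ℕ) (hp : p.Prime) (g : (ZMod p)ˣ)
    (hg : ∀ u : (ZMod p)ˣ, u ∈ Subgroup.zpowers g)
    (X Y : Fin p → ℂ)
    (hY : ∀ k : Fin p,
      Y k = ∑ ℓ : Fin p, X ℓ * dftRoot p ^ ((ℓ : ℕ) * (k : ℕ)))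
    (m : ℤ) :
    Y ⟨((g ^ (-m) : (ZMod p)ˣ) : ZMod p).val,
        by haveI : NeZero p := ⟨hp.ne_zero⟩; exact ZMod.val_lt _⟩ =
      X ⟨0, hp.pos⟩ +
        ∑ q : Fin (p - 1),
          X ⟨((g : ZMod p) ^ (q : ℕ)).val,
              by haveI : NeZero p := ⟨hp.ne_zero⟩; exact ZMod.val_lt _⟩ *
            Complex.exp (-(2 * Real.pi * Complex.I) *
              (((g ^ ((q : ℕ) - m) : (ZMod p)ˣ) : ZMod p).val : ℂ) / p) := by
  haveI : NeZero p := ⟨hp.ne_zero⟩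
  haveI := Fact.mk hp
  have hωp : dftRoot p ^ p = 1 := dftRoot_pow_self_s9 p hp.ne_zero
  have hmod : ∀ n : ℕ, dftRoot p ^ n = dftRoot p ^ (n % p) := by
    intro n
    conv_lhs => rw [← Nat.div_add_mod n p]
    rw [pow_add, pow_mul, hωp, one_pow, one_mul]
  have hval : ∀ a b : ZMod p, dftRoot p ^ (a.val * b.val) = dftRoot p ^ ((a * b).val) := by
    intro a b
    rw [ZMod.val_mul, ← hmod]
  have horder : orderOf g = p - 1 := by
    rw [orderOf_eq_card_of_forall_mem_zpowers hg, Nat.card_eq_fintype_card,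
      ZMod.card_units_eq_totient, Nat.totient_prime hp]
  rw [hY]
  rw [← Finset.add_sum_erase _ _ (Finset.mem_univ (⟨0, hp.pos⟩ : Fin p))]
  congr 1
  · simp
  · refine (Finset.sum_bij
      (i := fun (q : Fin (p - 1)) _ =>
        (⟨((g : ZMod p) ^ (q : ℕ)).val, ZMod.val_lt _⟩ : Fin p)) ?_ ?_ ?_ ?_).symm
    · intro q _
      refine Finset.mem_erase.mpr ⟨?_, Finset.mem_univ _⟩
      intro h
      have h0 : ((g : ZMod p) ^ (q : ℕ)).val = 0 := congrArg Fin.val h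
      have : ((g : ZMod p) ^ (q : ℕ)) = 0 := by
        rwa [← ZMod.val_eq_zero]
      exact (Units.ne_zero (g ^ (q : ℕ)) (by rwa [Units.val_pow_eq_pow_val]))
    · intro q1 _ q2 _ h
      have h0 : ((g : ZMod p) ^ (q1 : ℕ)).val = ((g : ZMod p) ^ (q2 : ℕ)).val :=
        congrArg Fin.val h
      have h1 : (g : ZMod p) ^ (q1 : ℕ) = (g : ZMod p) ^ (q2 : ℕ) := ZMod.val_injective p h0
      have h2 : g ^ (q1 : ℕ) = g ^ (q2 : ℕ) := Units.ext (by
        rwa [Units.val_pow_eq_pow_val, Units.val_pow_eq_pow_val])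
      have := pow_eq_pow_iff_modEq.mp h2
      rw [horder] at this
      exact Fin.ext ((Nat.ModEq.eq_of_lt_of_lt this q1.isLt q2.isLt))
    · intro b hb
      obtain ⟨hb0, -⟩ := Finset.mem_erase.mp hb
      have hbv : (b : ℕ) ≠ 0 := fun h => hb0 (Fin.ext h)
      have hbx : ((b : ℕ) : ZMod p) ≠ 0 := by
        rw [Ne, ZMod.natCast_eq_zero_iff]
        intro hdvd
        exact absurd (Nat.le_of_dvd (Nat.pos_of_ne_zero hbv) hdvd) (not_le.mpr b.isLt)
      set x : ZMod p := ((b : ℕ) : ZMod p) with hx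
      have hxu : IsUnit x := isUnit_iff_ne_zero.mpr hbx
      obtain ⟨n, hn⟩ := mem_powers_iff_mem_zpowers.mpr (hg hxu.unit)
      have hpm : 0 < p - 1 := by have := hp.two_le; omega
      refine ⟨⟨n % (p - 1), Nat.mod_lt _ hpm⟩, Finset.mem_univ _, ?_⟩
      have hg0 : g ^ (n % (p - 1)) = hxu.unit := by
        have h1 := pow_mod_orderOf g n
        rw [horder] at h1
        exact h1.trans hn
      apply Fin.ext
      show ((g : ZMod p) ^ (n % (p - 1))).val = (b : ℕ)
      rw [← Units.val_pow_eq_pow_val, hg0, hxu.unit_spec, hx, ZMod.val_cast_of_lt b.isLt]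
    · intro q _
      have hkval : ((⟨((g ^ (-m) : (ZMod p)ˣ) : ZMod p).val,
          ZMod.val_lt _⟩ : Fin p) : ℕ) = ((g ^ (-m) : (ZMod p)ˣ) : ZMod p).val := rfl
      rw [hval ((g : ZMod p) ^ (q : ℕ)) ((g ^ (-m) : (ZMod p)ˣ) : ZMod p)]
      have hmul : (g : ZMod p) ^ (q : ℕ) * ((g ^ (-m) : (ZMod p)ˣ) : ZMod p)
          = ((g ^ ((q : ℕ) - m) : (ZMod p)ˣ) : ZMod p) := by
        rw [← Units.val_pow_eq_pow_val, ← Units.val_mul]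
        congr 1
        rw [← zpow_natCast g (q : ℕ), ← zpow_add, sub_eq_add_neg]
      rw [hmul, dftRoot_pow]
end

section
/- Let n ≥ 1, let ω = exp(−πi/n) (a primitive 2n-th root of unity), let X : Fin n → ℂ, and let Y be the DFT of X. Then for every k with 0 ≤ k < n, Y[k] = ω^{k²} · Σ_{ℓ=0}^{n−1} (X[ℓ]·ω^{ℓ²}) · ω^{−(k−ℓ)²}. That is, using the identity ℓk = (ℓ² + k² − (k−ℓ)²)/2, the DFT of arbitrary length n is expressed as a chirp pre-multiplication, a convolution with the chirp sequence ω^{−j²}, and a chirp post-multiplication (Bluestein's chirp-z algorithm). -/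
/-- Bluestein's chirp-z algorithm: with `ω = exp(−πi/n)` a primitive `2n`-th root of
unity, the identity `ℓk = (ℓ² + k² − (k−ℓ)²)/2` expresses the size-`n` DFT as a chirp
pre-multiplication, a convolution with the chirp `ω^{−j²}`, and a chirp
post-multiplication: `Y[k] = ω^{k²} · Σ_ℓ (X[ℓ]·ω^{ℓ²}) · ω^{−(k−ℓ)²}`. -/
theorem bluestein_chirp_z
    (n : ℕ) (hn : 1 ≤ n)
    (X Y : Fin n → ℂ)
    (hY : ∀ k : Fin n,
      Y k = ∑ ℓ : Fin n, X ℓ *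
        Complex.exp (-(2 * Real.pi * Complex.I) / n) ^ ((ℓ : ℕ) * (k : ℕ)))
    (k : Fin n) :
    Y k = Complex.exp (-(Real.pi * Complex.I) / n) ^ ((k : ℕ) ^ 2) *
      ∑ ℓ : Fin n,
        (X ℓ * Complex.exp (-(Real.pi * Complex.I) / n) ^ ((ℓ : ℕ) ^ 2)) *
          Complex.exp (-(Real.pi * Complex.I) / n) ^ (-(((k : ℕ) : ℤ) - ((ℓ : ℕ) : ℤ)) ^ 2 : ℤ) := by
  set ω : ℂ := Complex.exp (-(Real.pi * Complex.I) / n) with hω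
  have hω0 : ω ≠ 0 := Complex.exp_ne_zero _
  have hsq : Complex.exp (-(2 * Real.pi * Complex.I) / n) = ω ^ 2 := by
    rw [hω, ← Complex.exp_nat_mul]
    ring_nf
  rw [hY k, Finset.mul_sum]
  refine Finset.sum_congr rfl fun ℓ _ => ?_
  rw [hsq]
  have key : (ω ^ 2) ^ ((ℓ : ℕ) * (k : ℕ)) =
      ω ^ ((k : ℕ) ^ 2) * (ω ^ ((ℓ : ℕ) ^ 2) *
        ω ^ (-(((k : ℕ) : ℤ) - ((ℓ : ℕ) : ℤ)) ^ 2 : ℤ)) := by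
    have h1 : ((ω ^ 2) ^ ((ℓ : ℕ) * (k : ℕ)) : ℂ) = ω ^ ((2 * (ℓ * k) : ℕ) : ℤ) := by
      rw [← pow_mul, zpow_natCast]
    have h2 : (ω ^ ((k : ℕ) ^ 2) : ℂ) = ω ^ (((k : ℕ) ^ 2 : ℕ) : ℤ) := by
      rw [zpow_natCast]
    have h3 : (ω ^ ((ℓ : ℕ) ^ 2) : ℂ) = ω ^ (((ℓ : ℕ) ^ 2 : ℕ) : ℤ) := by
      rw [zpow_natCast]
    rw [h1, h2, h3, ← zpow_add₀ hω0, ← zpow_add₀ hω0]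
    congr 1
    push_cast
    ring
  rw [key]
  ring
end
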